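/- For O = 2 outputs and S = 3 inputs, the number of equivalence classes of deterministic strategies of length L under relabeling of outcomes and of measurement settings equals 2^{(L−1)/2 + 3(3^L − 3)/4 − 1} + (1/6)(2^{3(3^L−3)/2} + 2^{(3^L−3)/2 + 1}). -/

import Mathlib

/-- A node of the complete ternary tree of depth `L-1`: an input history of
length `l < L`, inputs labelled by `Fin 3`. -/
abbrev TerNode (L : ℕ) := (l : Fin L) × (Fin (l : ℕ) → Fin 3)

/-- A deterministic strategy for `O = 2`, `S = 3`: each node carries a tuple in
`{0,1}^3`. -/
abbrev DetStrategy23 (L : ℕ) := TerNode L → (Fin 3 → ZMod 2)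

/-- Relabeling equivalence for `O = 2`, `S = 3`: `s'` is obtained from `s` by a
permutation `π` of the three settings (permuting tuple components and tree
branches simultaneously) together with outcome flips `c`, one per setting,
applied uniformly at all nodes. -/
def REquiv23 (L : ℕ) (s s' : DetStrategy23 L) : Prop :=
  ∃ (c : Fin 3 → ZMod 2) (π : Equiv.Perm (Fin 3)),
    ∀ (l : Fin L) (xs : Fin (l : ℕ) → Fin 3) (i : Fin 3),
      s' ⟨l, xs⟩ i = s ⟨l, fun j => π (xs j)⟩ (π i) + c i

/-!
Burnside's lemma for the 48 relabelings `g = (c, π)`. A strategy fixed by `g`, read as a function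
`F` of (node, setting) pairs, satisfies `F (π • a) + c = F a`. Evaluating at the root shows that
such `F` exist only if `c` is a coboundary `h - h ∘ π` on the three settings, and then `F ↦ F - F₀`
identifies them with the `π`-invariant functions, of which there are `2 ^ (number of ⟨π⟩-orbits)`.
By Burnside's lemma for `⟨π⟩`, with `n = (3 ^ L - 1) / 2` nodes, the identity, a transposition and
a 3-cycle have `3n`, `(3n + L) / 2` and `n` orbits, while they admit `1`, `2` and `4` coboundaries,
so the number `N` of classes satisfies `48 N = 2 ^ (3n) + 6 · 2 ^ ((3n + L) / 2) + 8 · 2 ^ n`.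
-/

open MulAction Subgroup
open Equiv (Perm)

section InvariantFunctions

variable {G α β : Type*} [Group G] [MulAction G α]

theorem apply_zpow_smul_eq_of_apply_smul_eq {F : α → β} {g : G} (hF : ∀ a, F (g • a) = F a)
    (k : ℤ) (a : α) : F (g ^ k • a) = F a := by
  induction k using Int.induction_on generalizing a with
  | zero => rw [zpow_zero, one_smul]
  | succ k ih => rw [zpow_add_one, mul_smul, ih, hF]
  | pred k ih => rw [zpow_sub_one, mul_smul, ih, ← hF, smul_inv_smul]

def invariantFunEquiv (g : G) :
    {F : α → β // ∀ a, F (g • a) = F a} ≃ (orbitRel.Quotient (zpowers g) α → β) where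
  toFun F := Quotient.lift F.1 fun a b hab => by
    obtain ⟨⟨_, k, rfl⟩, rfl⟩ := hab
    exact apply_zpow_smul_eq_of_apply_smul_eq F.2 k b
  invFun Φ := ⟨fun a => Φ ⟦a⟧, fun a => congrArg Φ (Quotient.sound ⟨⟨g, mem_zpowers g⟩, rfl⟩)⟩
  left_inv _ := rfl
  right_inv Φ := funext fun q => Quotient.inductionOn q fun _ => rfl

theorem card_invariantFun [Finite α] (g : G) :
    Nat.card {F : α → β // ∀ a, F (g • a) = F a} =
      Nat.card β ^ Nat.card (orbitRel.Quotient (zpowers g) α) := by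
  rw [Nat.card_congr (invariantFunEquiv g), Nat.card_fun]

def affineFixEquiv [AddCommGroup β] {g : G} {c : α → β} {F₀ : α → β}
    (hF₀ : ∀ a, F₀ (g • a) + c a = F₀ a) :
    {F : α → β // ∀ a, F (g • a) + c a = F a} ≃ {F : α → β // ∀ a, F (g • a) = F a} where
  toFun F := ⟨F.1 - F₀, fun a => by
    simp only [Pi.sub_apply, ← F.2 a, ← hF₀ a, add_sub_add_right_eq_sub]⟩
  invFun F := ⟨F.1 + F₀, fun a => by simp only [Pi.add_apply, F.2 a, ← hF₀ a, add_assoc]⟩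
  left_inv F := Subtype.ext (sub_add_cancel _ _)
  right_inv F := Subtype.ext (add_sub_cancel_right _ _)

theorem card_affineFix [AddCommGroup β] [Finite α] {g : G} {c : α → β} {F₀ : α → β}
    (hF₀ : ∀ a, F₀ (g • a) + c a = F₀ a) :
    Nat.card {F : α → β // ∀ a, F (g • a) + c a = F a} =
      Nat.card β ^ Nat.card (orbitRel.Quotient (zpowers g) α) := by
  rw [Nat.card_congr (affineFixEquiv hF₀), card_invariantFun]

theorem card_orbitRel_quotient_zpowers_mul_orderOf [Finite G] [Finite α] (g : G) :
    Nat.card (orbitRel.Quotient (zpowers g) α) * orderOf g =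
      ∑ k ∈ Finset.range (orderOf g), Nat.card (fixedBy α (g ^ k)) := by
  classical
  have := Fintype.ofFinite α
  have := Fintype.ofFinite (orbitRel.Quotient (zpowers g) α)
  have := Fintype.ofFinite G
  have burnside := sum_card_fixedBy_eq_card_orbits_mul_card_group (zpowers g) α
  rw [Fintype.card_zpowers] at burnside
  rw [Nat.card_eq_fintype_card, ← burnside, ← Fin.sum_univ_eq_sum_range,
    ← (finEquivZPowers (isOfFinOrder_of_finite g)).sum_comp]
  simp only [finEquivZPowers_apply, Nat.card_eq_fintype_card]
  rfl

theorem exists_affineFix_prod_iff [Add β] {N A : Type*} [MulAction G N] [MulAction G A] {g : G}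
    {n₀ : N} (hn₀ : g • n₀ = n₀) (c : A → β) :
    (∃ F : N × A → β, ∀ a, F (g • a) + c a.2 = F a) ↔
      ∃ h : A → β, ∀ i, h (g • i) + c i = h i := by
  constructor
  · rintro ⟨F, hF⟩
    refine ⟨fun i => F (n₀, i), fun i => ?_⟩
    simpa only [Prod.smul_mk, hn₀] using hF (n₀, i)
  · rintro ⟨h, hh⟩
    exact ⟨fun a => h a.2, fun a => hh a.2⟩

end InvariantFunctions

section FixedPoints

variable {M : Type*} [Monoid M]

def fixedByProdEquiv {A B : Type*} [MulAction M A] [MulAction M B] (m : M) :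
    fixedBy (A × B) m ≃ fixedBy A m × fixedBy B m where
  toFun x := (⟨x.1.1, congrArg Prod.fst x.2⟩, ⟨x.1.2, congrArg Prod.snd x.2⟩)
  invFun y := ⟨(y.1, y.2), Prod.ext y.1.2 y.2.2⟩
  left_inv _ := rfl
  right_inv _ := rfl

def fixedBySigmaEquiv {ι : Type*} {A : ι → Type*} [∀ i, MulAction M (A i)] (m : M) :
    fixedBy (Σ i, A i) m ≃ Σ i, fixedBy (A i) m where
  toFun x := ⟨x.1.1, x.1.2, eq_of_heq (Sigma.mk.inj_iff.mp x.2).2⟩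
  invFun y := ⟨⟨y.1, y.2.1⟩, congrArg (Sigma.mk y.1) y.2.2⟩
  left_inv _ := rfl
  right_inv _ := rfl

def fixedByPiEquiv {ι A : Type*} [MulAction M A] (m : M) :
    fixedBy (ι → A) m ≃ (ι → fixedBy A m) where
  toFun x i := ⟨x.1 i, congrFun x.2 i⟩
  invFun y := ⟨fun i => y i, funext fun i => (y i).2⟩
  left_inv _ := rfl
  right_inv _ := rfl

end FixedPoints

theorem card_fixedBy_terNode_prod (L : ℕ) (σ : Perm (Fin 3)) :
    Nat.card (fixedBy (TerNode L × Fin 3) σ) =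
      (∑ l ∈ Finset.range L, Nat.card (fixedBy (Fin 3) σ) ^ l) * Nat.card (fixedBy (Fin 3) σ) := by
  rw [Nat.card_congr (fixedByProdEquiv σ), Nat.card_prod, Nat.card_congr (fixedBySigmaEquiv σ),
    Nat.card_sigma, ← Fin.sum_univ_eq_sum_range]
  congr 1
  refine Finset.sum_congr rfl fun l _ => ?_
  rw [Nat.card_congr (fixedByPiEquiv σ), Nat.card_fun, Nat.card_eq_fintype_card (α := Fin l),
    Fintype.card_fin]

theorem perm_fin_three_cases (σ : Perm (Fin 3)) :
    σ = 1 ∨ (σ ^ 2 = 1 ∧ σ ≠ 1 ∧ Nat.card (fixedBy (Fin 3) σ) = 1) ∨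
      (σ ^ 3 = 1 ∧ σ ≠ 1 ∧ σ ^ 2 ≠ 1 ∧ Nat.card (fixedBy (Fin 3) σ) = 0 ∧
        Nat.card (fixedBy (Fin 3) (σ ^ 2)) = 0) := by
  have card_fixedBy (τ : Perm (Fin 3)) :
      Nat.card (fixedBy (Fin 3) τ) = (Finset.univ.filter fun i => τ i = i).card := by
    rw [← Nat.card_eq_finsetCard]
    congr
    ext i
    simp [Perm.smul_def]
  simp only [card_fixedBy]
  revert σ
  decide

theorem card_orbits_zpowers_terNode_prod (L : ℕ) (σ : Perm (Fin 3)) :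
    Nat.card (orbitRel.Quotient (zpowers σ) (TerNode L × Fin 3)) =
      if σ = 1 then 3 * ∑ l ∈ Finset.range L, 3 ^ l
      else if σ ^ 2 = 1 then (3 * ∑ l ∈ Finset.range L, 3 ^ l + L) / 2
      else ∑ l ∈ Finset.range L, 3 ^ l := by
  have burnside := card_orbitRel_quotient_zpowers_mul_orderOf (α := TerNode L × Fin 3) σ
  simp only [card_fixedBy_terNode_prod] at burnside
  have card_fixedBy_one : Nat.card (fixedBy (Fin 3) (1 : Perm (Fin 3))) = 3 := by
    rw [fixedBy_one_eq_univ, Nat.card_univ, Nat.card_eq_fintype_card, Fintype.card_fin]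
  rcases perm_fin_three_cases σ with rfl | ⟨h2, h1, hfix⟩ | ⟨h3, h1, h2, hfix, hfix2⟩
  · simp only [orderOf_one, Finset.sum_range_one, pow_zero, card_fixedBy_one, mul_one] at burnside
    rw [if_pos rfl, burnside, mul_comm]
  · rw [orderOf_eq_prime h2 h1] at burnside
    simp only [Finset.sum_range_succ, Finset.sum_range_zero, zero_add, pow_zero, pow_one,
      card_fixedBy_one, hfix, one_pow, Finset.sum_const, Finset.card_range, smul_eq_mul,
      mul_one] at burnside
    rw [if_neg h1, if_pos h2]
    omega
  · rw [orderOf_eq_prime h3 h1] at burnside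
    simp only [Finset.sum_range_succ, Finset.sum_range_zero, zero_add, pow_zero, pow_one,
      card_fixedBy_one, hfix, hfix2, mul_zero, add_zero] at burnside
    rw [if_neg h1, if_neg h2]
    omega

@[ext]
structure Relabeling where
  flips : Fin 3 → ZMod 2
  perm : Perm (Fin 3)

namespace Relabeling

def equivProd : Relabeling ≃ (Fin 3 → ZMod 2) × Perm (Fin 3) where
  toFun g := (g.flips, g.perm)
  invFun x := ⟨x.1, x.2⟩

instance : Fintype Relabeling := Fintype.ofEquiv _ equivProd.symm

theorem card_eq : Nat.card Relabeling = 48 := by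
  rw [Nat.card_eq_fintype_card, Fintype.card_congr equivProd, Fintype.card_prod, Fintype.card_fun,
    ZMod.card, Fintype.card_perm, Fintype.card_fin]
  rfl

-- the product for which `(a * b) • s = a • b • s` under the action on strategies below
instance : Mul Relabeling := ⟨fun a b => ⟨fun i => a.flips i + b.flips (a.perm i), b.perm * a.perm⟩⟩
instance : One Relabeling := ⟨⟨0, 1⟩⟩
instance : Inv Relabeling := ⟨fun a => ⟨fun i => a.flips (a.perm⁻¹ i), a.perm⁻¹⟩⟩

@[simp] theorem mul_flips (a b : Relabeling) (i : Fin 3) :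
    (a * b).flips i = a.flips i + b.flips (a.perm i) := rfl
@[simp] theorem mul_perm (a b : Relabeling) : (a * b).perm = b.perm * a.perm := rfl
@[simp] theorem one_flips : (1 : Relabeling).flips = 0 := rfl
@[simp] theorem one_perm : (1 : Relabeling).perm = 1 := rfl
@[simp] theorem inv_flips (a : Relabeling) (i : Fin 3) : a⁻¹.flips i = a.flips (a.perm⁻¹ i) := rfl
@[simp] theorem inv_perm (a : Relabeling) : a⁻¹.perm = a.perm⁻¹ := rfl

instance : Group Relabeling where
  mul_assoc a b c := by ext <;> simp [add_assoc, mul_assoc]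
  one_mul a := by ext <;> simp
  mul_one a := by ext <;> simp
  inv_mul_cancel a := by ext <;> simp [CharTwo.add_self_eq_zero]

instance (L : ℕ) : MulAction Relabeling (DetStrategy23 L) where
  smul g s node i := s (g.perm • node) (g.perm i) + g.flips i
  one_smul s := by
    funext node i
    show s ((1 : Perm (Fin 3)) • node) i + 0 = s node i
    rw [one_smul, add_zero]
  mul_smul a b s := by
    funext node i
    show s ((b.perm * a.perm) • node) ((b.perm * a.perm) i) + (a.flips i + b.flips (a.perm i)) =
      s (b.perm • a.perm • node) (b.perm (a.perm i)) + b.flips (a.perm i) + a.flips i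
    rw [mul_smul, Perm.mul_apply, add_comm (a.flips i), add_assoc]

theorem smul_apply {L : ℕ} (g : Relabeling) (s : DetStrategy23 L) (node : TerNode L) (i : Fin 3) :
    (g • s) node i = s (g.perm • node) (g.perm i) + g.flips i := rfl

def IsCoboundary (g : Relabeling) : Prop :=
  ∃ h : Fin 3 → ZMod 2, ∀ i, h (g.perm • i) + g.flips i = h i

instance : DecidablePred IsCoboundary := fun g => by unfold IsCoboundary; infer_instance

theorem sum_ite_isCoboundary (A B C : ℕ) :
    ∑ g : Relabeling, (if g.IsCoboundary then
      (if g.perm = 1 then A else if g.perm ^ 2 = 1 then B else C) else 0) = A + 6 * B + 8 * C := by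
  simp only [Finset.sum_ite, Finset.sum_const, smul_eq_mul, Finset.filter_filter]
  -- the identity admits 1 coboundary, each of the 3 transpositions 2, each of the 2 3-cycles 4
  have h1 : (Finset.univ.filter fun g : Relabeling => g.IsCoboundary ∧ g.perm = 1).card = 1 := by
    decide
  have h2 : (Finset.univ.filter fun g : Relabeling =>
      (g.IsCoboundary ∧ ¬g.perm = 1) ∧ g.perm ^ 2 = 1).card = 6 := by
    decide
  have h3 : (Finset.univ.filter fun g : Relabeling =>
      (g.IsCoboundary ∧ ¬g.perm = 1) ∧ ¬g.perm ^ 2 = 1).card = 8 := by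
    decide
  rw [h1, h2, h3]
  ring

end Relabeling

section Strategies

variable {L : ℕ}

def fixedByDetStrategyEquiv (g : Relabeling) :
    fixedBy (DetStrategy23 L) g ≃
      {F : TerNode L × Fin 3 → ZMod 2 // ∀ a, F (g.perm • a) + g.flips a.2 = F a} :=
  (Equiv.curry _ _ _).symm.subtypeEquiv fun s => by
    simp only [mem_fixedBy, funext_iff, Relabeling.smul_apply, Prod.forall]
    rfl

theorem card_fixedBy_detStrategy (hL : 1 ≤ L) (g : Relabeling) :
    Nat.card (fixedBy (DetStrategy23 L) g) =
      if g.IsCoboundary then 2 ^ Nat.card (orbitRel.Quotient (zpowers g.perm) (TerNode L × Fin 3))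
      else 0 := by
  have hroot : g.perm • (⟨⟨0, hL⟩, Fin.elim0⟩ : TerNode L) = ⟨⟨0, hL⟩, Fin.elim0⟩ :=
    congrArg (Sigma.mk _) (funext fun j => j.elim0)
  have hsolvable := exists_affineFix_prod_iff hroot g.flips
  rw [Nat.card_congr (fixedByDetStrategyEquiv g)]
  split_ifs with hg
  · obtain ⟨F₀, hF₀⟩ := hsolvable.mpr hg
    rw [card_affineFix hF₀, Nat.card_zmod]
  · have : IsEmpty {F : TerNode L × Fin 3 → ZMod 2 // ∀ a, F (g.perm • a) + g.flips a.2 = F a} :=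
      ⟨fun F => hg (hsolvable.mp ⟨F.1, F.2⟩)⟩
    exact Nat.card_of_isEmpty

theorem rEquiv23_iff_orbitRel (s s' : DetStrategy23 L) :
    REquiv23 L s s' ↔ orbitRel Relabeling (DetStrategy23 L) s s' := by
  rw [Setoid.comm', orbitRel_apply]
  constructor
  · rintro ⟨c, π, h⟩
    exact ⟨⟨c, π⟩, funext fun node => funext fun i => (h node.1 node.2 i).symm⟩
  · rintro ⟨g, rfl⟩
    exact ⟨g.flips, g.perm, fun _ _ _ => rfl⟩

theorem card_quot_rEquiv23_mul_eq_sum_card_fixedBy :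
    Nat.card (Quot (REquiv23 L)) * 48 =
      ∑ g : Relabeling, Nat.card (fixedBy (DetStrategy23 L) g) := by
  classical
  have := Fintype.ofFinite (orbitRel.Quotient Relabeling (DetStrategy23 L))
  have burnside := sum_card_fixedBy_eq_card_orbits_mul_card_group Relabeling (DetStrategy23 L)
  simp only [Fintype.card_eq_nat_card, Relabeling.card_eq] at burnside
  rw [Nat.card_congr (Quot.congrRight rEquiv23_iff_orbitRel)]
  exact burnside.symm

theorem sum_card_fixedBy_detStrategy (hL : 1 ≤ L) :
    ∑ g : Relabeling, Nat.card (fixedBy (DetStrategy23 L) g) =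
      2 ^ (3 * ∑ l ∈ Finset.range L, 3 ^ l) +
        6 * 2 ^ ((3 * ∑ l ∈ Finset.range L, 3 ^ l + L) / 2) +
        8 * 2 ^ (∑ l ∈ Finset.range L, 3 ^ l) := by
  simp only [card_fixedBy_detStrategy hL, card_orbits_zpowers_terNode_prod, apply_ite (2 ^ ·)]
  exact Relabeling.sum_ite_isCoboundary _ _ _

end Strategies

/-- For `O = 2` outputs and `S = 3` inputs, the number of equivalence classes of
deterministic strategies of length `L` under relabeling of outcomes and of
measurement settings equals
`2^((L-1)/2 + 3(3^L-3)/4 - 1) + (1/6)(2^(3(3^L-3)/2) + 2^((3^L-3)/2 + 1))`. -/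
theorem card_RE_classes_23 (L : ℕ) (hL : 1 ≤ L) :
    (Nat.card (Quot (REquiv23 L)) : ℝ) =
      2 ^ ((L - 1 : ℝ) / 2 + 3 * ((3 : ℝ) ^ L - 3) / 4 - 1) +
      (1 / 6) * (2 ^ (3 * ((3 : ℝ) ^ L - 3) / 2) +
                 2 ^ (((3 : ℝ) ^ L - 3) / 2 + 1)) := by
  set n := ∑ l ∈ Finset.range L, 3 ^ l with hn
  have hparity : n % 2 = L % 2 := by rw [hn, Finset.sum_nat_mod]; simp [Nat.pow_mod]
  obtain ⟨d, hd⟩ : ∃ d, 3 * n + L = 2 * d := ⟨(3 * n + L) / 2, by omega⟩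
  have hcount : (Nat.card (Quot (REquiv23 L)) : ℝ) * 48 = 2 ^ (3 * n) + 6 * 2 ^ d + 8 * 2 ^ n := by
    have := card_quot_rEquiv23_mul_eq_sum_card_fixedBy.trans (sum_card_fixedBy_detStrategy hL)
    rw [show (3 * n + L) / 2 = d by omega] at this
    exact_mod_cast this
  have h3L : (3 : ℝ) ^ L = 2 * n + 1 := by
    have := geom_sum_mul_add (2 : ℝ) L
    norm_num at this
    rw [hn]
    push_cast
    linarith
  have hdR : (2 * d : ℝ) = 3 * n + L := by exact_mod_cast hd.symm
  rw [show (L - 1 : ℝ) / 2 + 3 * ((3 : ℝ) ^ L - 3) / 4 - 1 = (d : ℝ) - (3 : ℕ) by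
      rw [h3L]; push_cast; linarith,
    show 3 * ((3 : ℝ) ^ L - 3) / 2 = ((3 * n : ℕ) : ℝ) - (3 : ℕ) by rw [h3L]; push_cast; ring,
    show ((3 : ℝ) ^ L - 3) / 2 + 1 = (n : ℝ) by rw [h3L]; ring]
  simp only [Real.rpow_sub_natCast two_ne_zero, Real.rpow_natCast]
  linear_combination hcount / 48
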